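/- arXiv:2301.12680 — 5 statements merged into one kernel-verified Lean document; each statement's English description precedes it below -/
import Mathlib

section
/- The difference between the adversarial risk and the empirical risk is bounded: |R_adv − R| ≤ τ, where τ = 1 − ∫_{X×K} exp( ∫_Θ ∑_{c ∈ K} p(θ, x, c) · log(p(θ, adv(x), c)) dμ(θ) ) dD(x, y). (Paper's Proposition 1, measure-theoretic form.) -/
open MeasureTheory Finset

lemma probvec_abs_sub_le {K : Type*} [Fintype K] (p q : K → ℝ)
    (hp0 : ∀ c, 0 < p c) (hq0 : ∀ c, 0 < q c)
    (hp1 : ∑ c, p c = 1) (hq1 : ∑ c, q c = 1) (y : K) :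
    |q y - p y| ≤ 1 - Real.exp (∑ c, p c * Real.log (q c)) := by
  have hple : ∀ c, p c ≤ 1 := fun c =>
    hp1 ▸ Finset.single_le_sum (fun i _ => (hp0 i).le) (mem_univ c)
  have hqle : ∀ c, q c ≤ 1 := fun c =>
    hq1 ▸ Finset.single_le_sum (fun i _ => (hq0 i).le) (mem_univ c)
  classical
  have hexp : Real.exp (∑ c, p c * Real.log (q c)) ≤ ∑ c, p c * q c := by
    have h := convexOn_exp.map_sum_le (t := univ) (w := p) (p := fun c => Real.log (q c))
      (fun i _ => (hp0 i).le) hp1 (fun i _ => trivial)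
    simp only [smul_eq_mul, Real.exp_log (hq0 _)] at h
    exact h
  have hsplit : ∑ c, p c * q c = p y * q y + ∑ c ∈ univ.erase y, p c * q c := by
    rw [← Finset.add_sum_erase _ _ (mem_univ y)]
  have hpery : ∑ c ∈ univ.erase y, p c = 1 - p y := by
    have := Finset.add_sum_erase univ p (mem_univ y)
    rw [hp1] at this; linarith
  have hqery : ∑ c ∈ univ.erase y, q c = 1 - q y := by
    have := Finset.add_sum_erase univ q (mem_univ y)
    rw [hq1] at this; linarith
  have key : ∑ c, p c * q c ≤ 1 - |q y - p y| := by
    rcases le_total (q y) (p y) with h | h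
    · rw [abs_of_nonpos (by linarith)]
      have h1 : p y * q y ≤ q y := by nlinarith [(hq0 y).le, hple y]
      have h2 : ∑ c ∈ univ.erase y, p c * q c ≤ ∑ c ∈ univ.erase y, p c :=
        Finset.sum_le_sum fun c _ => by nlinarith [(hp0 c).le, hqle c]
      rw [hsplit]; rw [hpery] at h2; linarith
    · rw [abs_of_nonneg (by linarith)]
      have h1 : p y * q y ≤ p y := by nlinarith [(hp0 y).le, hqle y]
      have h2 : ∑ c ∈ univ.erase y, p c * q c ≤ ∑ c ∈ univ.erase y, q c :=
        Finset.sum_le_sum fun c _ => by nlinarith [(hq0 c).le, hple c]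
      rw [hsplit]; rw [hqery] at h2; linarith
  linarith

/-- Paper's Proposition 1, measure-theoretic form: the difference between the
adversarial risk `R_adv = ∫ p θ (adv x) y dμ dD` and the empirical risk
`R = ∫ p θ x y dμ dD` is bounded by
`τ = 1 − ∫ exp (∫ ∑ c, p θ x c * log (p θ (adv x) c) dμ) dD`. -/
theorem adversarial_risk_sub_empirical_risk_bounded_measure
    {K : Type*} [Fintype K] [Nonempty K] [MeasurableSpace K]
    {Θ : Type*} [MeasurableSpace Θ] (μ : Measure Θ) [IsProbabilityMeasure μ]
    {X : Type*} [MeasurableSpace X] (D : Measure (X × K)) [IsProbabilityMeasure D]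
    (adv : X → X) (hadv : Measurable adv)
    (p : Θ → X → K → ℝ)
    (hpmeas : Measurable fun t : Θ × X × K => p t.1 t.2.1 t.2.2)
    (hp0 : ∀ θ x c, 0 < p θ x c) (hp1 : ∀ θ x, ∑ c, p θ x c = 1)
    (hintR : Integrable (fun t : Θ × (X × K) => p t.1 t.2.1 t.2.2) (μ.prod D))
    (hintRadv : Integrable (fun t : Θ × (X × K) => p t.1 (adv t.2.1) t.2.2)
      (μ.prod D))
    (hintr : ∀ x : X, Integrable
      (fun θ : Θ => ∑ c, p θ x c * Real.log (p θ (adv x) c)) μ)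
    (hintexp : Integrable (fun xy : X × K => Real.exp
      (∫ θ, ∑ c, p θ xy.1 c * Real.log (p θ (adv xy.1) c) ∂μ)) D) :
    |(∫ xy : X × K, ∫ θ, p θ (adv xy.1) xy.2 ∂μ ∂D) -
        (∫ xy : X × K, ∫ θ, p θ xy.1 xy.2 ∂μ ∂D)| ≤
      1 - ∫ xy : X × K, Real.exp
        (∫ θ, ∑ c, p θ xy.1 c * Real.log (p θ (adv xy.1) c) ∂μ) ∂D := by
  set g : X → Θ → ℝ := fun x θ => ∑ c, p θ x c * Real.log (p θ (adv x) c) with hg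
  -- pointwise bound in θ
  have hpt : ∀ θ x y, |p θ (adv x) y - p θ x y| ≤ 1 - Real.exp (g x θ) := fun θ x y =>
    probvec_abs_sub_le (p θ x) (p θ (adv x)) (hp0 θ x) (hp0 θ (adv x))
      (hp1 θ x) (hp1 θ (adv x)) y
  have hexp_le_one : ∀ x θ, Real.exp (g x θ) ≤ 1 := by
    intro x θ
    obtain ⟨y⟩ := ‹Nonempty K›
    have := hpt θ x y
    have := abs_nonneg (p θ (adv x) y - p θ x y)
    linarith
  -- integrability of exp ∘ g x over μ
  have hexpInt : ∀ x, Integrable (fun θ => Real.exp (g x θ)) μ := by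
    intro x
    refine (integrable_const (1 : ℝ)).mono'
      (Real.continuous_exp.comp_aestronglyMeasurable (hintr x).aestronglyMeasurable)
      (Filter.Eventually.of_forall fun θ => ?_)
    rw [Real.norm_eq_abs, abs_of_pos (Real.exp_pos _)]
    exact hexp_le_one x θ
  -- Jensen: exp (∫ g) ≤ ∫ exp g
  have hjensen : ∀ x, Real.exp (∫ θ, g x θ ∂μ) ≤ ∫ θ, Real.exp (g x θ) ∂μ := by
    intro x
    set m := ∫ θ, g x θ ∂μ with hm
    have hpt2 : ∀ θ, Real.exp m * (g x θ - m + 1) ≤ Real.exp (g x θ) := by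
      intro θ
      have h1 : g x θ - m + 1 ≤ Real.exp (g x θ - m) := Real.add_one_le_exp _
      have h2 : Real.exp m * Real.exp (g x θ - m) = Real.exp (g x θ) := by
        rw [← Real.exp_add]; ring_nf
      nlinarith [Real.exp_pos m]
    have hint1 : Integrable (fun θ => Real.exp m * (g x θ - m + 1)) μ :=
      (((hintr x).sub (integrable_const m)).add (integrable_const 1)).const_mul _
    have hmono := integral_mono hint1 (hexpInt x) hpt2
    have heq : ∫ θ, (g x θ - m + 1) ∂μ = 1 := by
      rw [integral_add (f := fun θ => g x θ - m) (g := fun _ => (1 : ℝ))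
          ((hintr x).sub (integrable_const m)) (integrable_const 1),
        integral_sub (hintr x) (integrable_const m), integral_const, integral_const]
      simp [hm, hg]
    rw [MeasureTheory.integral_const_mul, heq, mul_one] at hmono
    exact hmono
  -- a.e. pointwise (in xy) bound on the inner integrals
  have haeq : ∀ᵐ xy ∂D, Integrable (fun θ => p θ (adv xy.1) xy.2) μ :=
    hintRadv.prod_left_ae
  have haep : ∀ᵐ xy ∂D, Integrable (fun θ => p θ xy.1 xy.2) μ := hintR.prod_left_ae
  have hbound : ∀ᵐ xy ∂D,
      |(∫ θ, p θ (adv xy.1) xy.2 ∂μ) - ∫ θ, p θ xy.1 xy.2 ∂μ| ≤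
        1 - Real.exp (∫ θ, g xy.1 θ ∂μ) := by
    filter_upwards [haeq, haep] with xy hq hp'
    rw [← integral_sub hq hp']
    calc |∫ θ, (p θ (adv xy.1) xy.2 - p θ xy.1 xy.2) ∂μ|
        ≤ ∫ θ, |p θ (adv xy.1) xy.2 - p θ xy.1 xy.2| ∂μ := by
          simpa [Real.norm_eq_abs] using
            norm_integral_le_integral_norm (fun θ => p θ (adv xy.1) xy.2 - p θ xy.1 xy.2)
      _ ≤ ∫ θ, (1 - Real.exp (g xy.1 θ)) ∂μ :=
          integral_mono (hq.sub hp').abs ((integrable_const 1).sub (hexpInt xy.1))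
            fun θ => hpt θ xy.1 xy.2
      _ = 1 - ∫ θ, Real.exp (g xy.1 θ) ∂μ := by
          rw [integral_sub (integrable_const 1) (hexpInt xy.1), integral_const,
            probReal_univ, one_smul]
      _ ≤ 1 - Real.exp (∫ θ, g xy.1 θ ∂μ) := by linarith [hjensen xy.1]
  -- integrate over D
  have hFint : Integrable (fun xy : X × K => ∫ θ, p θ (adv xy.1) xy.2 ∂μ) D :=
    hintRadv.integral_prod_right
  have hGint : Integrable (fun xy : X × K => ∫ θ, p θ xy.1 xy.2 ∂μ) D :=
    hintR.integral_prod_right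
  rw [← integral_sub hFint hGint]
  calc |∫ xy, ((∫ θ, p θ (adv xy.1) xy.2 ∂μ) - ∫ θ, p θ xy.1 xy.2 ∂μ) ∂D|
      ≤ ∫ xy, |(∫ θ, p θ (adv xy.1) xy.2 ∂μ) - ∫ θ, p θ xy.1 xy.2 ∂μ| ∂D := by
        simpa [Real.norm_eq_abs] using norm_integral_le_integral_norm
          (fun xy : X × K => (∫ θ, p θ (adv xy.1) xy.2 ∂μ) - ∫ θ, p θ xy.1 xy.2 ∂μ)
    _ ≤ ∫ xy, (1 - Real.exp (∫ θ, g xy.1 θ ∂μ)) ∂D :=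
        integral_mono_ae (hFint.sub hGint).abs ((integrable_const 1).sub hintexp) hbound
    _ = 1 - ∫ xy, Real.exp (∫ θ, g xy.1 θ ∂μ) ∂D := by
        rw [integral_sub (integrable_const 1) hintexp, integral_const, probReal_univ,
          one_smul]
end

section
/- The difference between the adversarial risk and the empirical risk is bounded: |R_adv − R| ≤ 1 − (1/m) ∑_{j} exp( (1/n) ∑_{i} r_{i,j} ). (Paper's Proposition 1, finite-particle finite-dataset form.) -/
open Finset Real

/-- Jensen for `exp` with uniform weights. -/
lemma exp_avg_le {n : ℕ} (hn : 1 ≤ n) (f : Fin n → ℝ) :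
    Real.exp ((1 / (n : ℝ)) * ∑ i, f i) ≤ (1 / (n : ℝ)) * ∑ i, Real.exp (f i) := by
  have hn' : (0:ℝ) < n := by exact_mod_cast hn
  have h := Real.geom_mean_le_arith_mean_weighted Finset.univ
    (fun _ : Fin n => 1 / (n : ℝ)) (fun i => Real.exp (f i))
    (fun i _ => by positivity)
    (by simp; field_simp)
    (fun i _ => (Real.exp_pos _).le)
  calc Real.exp ((1 / (n : ℝ)) * ∑ i, f i)
      = ∏ i, Real.exp (f i) ^ (1 / (n : ℝ)) := by
        rw [Finset.mul_sum, Real.exp_sum]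
        congr 1 with i
        rw [Real.rpow_def_of_pos (Real.exp_pos _), Real.log_exp, mul_comm]
    _ ≤ ∑ i, (1 / (n : ℝ)) * Real.exp (f i) := h
    _ = (1 / (n : ℝ)) * ∑ i, Real.exp (f i) := by rw [Finset.mul_sum]

/-- Per-sample key bound: `|q y - p y| ≤ 1 - exp (∑ c, p c * log (q c))`. -/
lemma key_bound {K : Type*} [Fintype K] (y : K) (p q : K → ℝ)
    (hp0 : ∀ c, 0 ≤ p c) (hp1 : ∑ c, p c = 1)
    (hq0 : ∀ c, 0 < q c) (hq1 : ∑ c, q c = 1) :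
    |q y - p y| ≤ 1 - Real.exp (∑ c, p c * Real.log (q c)) := by
  classical
  have hple : ∀ c, p c ≤ 1 := fun c => by
    rw [← hp1]
    exact Finset.single_le_sum (fun c _ => hp0 c) (Finset.mem_univ c)
  have hqle : ∀ c, q c ≤ 1 := fun c => by
    rw [← hq1]
    exact Finset.single_le_sum (fun c _ => (hq0 c).le) (Finset.mem_univ c)
  -- exp (∑ p log q) = ∏ q ^ p ≤ ∑ p * q
  have h1 : Real.exp (∑ c, p c * Real.log (q c)) ≤ ∑ c, p c * q c := by
    have h := Real.geom_mean_le_arith_mean_weighted Finset.univ p q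
      (fun c _ => hp0 c) hp1 (fun c _ => (hq0 c).le)
    calc Real.exp (∑ c, p c * Real.log (q c)) = ∏ c, q c ^ p c := by
          rw [Real.exp_sum]
          congr 1 with c
          rw [Real.rpow_def_of_pos (hq0 c), mul_comm]
      _ ≤ ∑ c, p c * q c := h
  -- ∑ p * q ≤ ∑ min p q
  have h2 : ∑ c, p c * q c ≤ ∑ c, min (p c) (q c) := by
    apply Finset.sum_le_sum
    intro c _
    rcases le_total (p c) (q c) with h | h
    · simpa [min_eq_left h] using mul_le_of_le_one_right (hp0 c) (hqle c)
    · simpa [min_eq_right h] using mul_le_of_le_one_left (hq0 c).le (hple c)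
  -- ∑ min p q ≤ 1 - |q y - p y|
  have e1 : ∀ f : K → ℝ, ∑ c, f c = f y + ∑ c ∈ Finset.univ.erase y, f c :=
    fun f => (Finset.add_sum_erase _ f (Finset.mem_univ y)).symm
  have hA : ∑ c, min (p c) (q c) ≤ p y + (1 - q y) := by
    have : ∑ c ∈ Finset.univ.erase y, q c = 1 - q y := by
      have := e1 q; rw [hq1] at this; linarith
    rw [e1 (fun c => min (p c) (q c)), ← this]
    exact add_le_add (min_le_left _ _)
      (Finset.sum_le_sum fun c _ => min_le_right _ _)
  have hB : ∑ c, min (p c) (q c) ≤ q y + (1 - p y) := by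
    have : ∑ c ∈ Finset.univ.erase y, p c = 1 - p y := by
      have := e1 p; rw [hp1] at this; linarith
    rw [e1 (fun c => min (p c) (q c)), ← this]
    exact add_le_add (min_le_right _ _)
      (Finset.sum_le_sum fun c _ => min_le_left _ _)
  have h3 : |q y - p y| ≤ 1 - ∑ c, min (p c) (q c) :=
    abs_sub_le_iff.mpr ⟨by linarith, by linarith⟩
  linarith [h1, h2, h3]

/-- Paper's Proposition 1, finite-particle finite-dataset form: the difference
between the adversarial risk `R_adv = (1/(n·m)) ∑_{i,j} q i j (y j)` and the
empirical risk `R = (1/(n·m)) ∑_{i,j} p i j (y j)` is bounded by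
`1 − (1/m) ∑_j exp ((1/n) ∑_i r i j)` with
`r i j = ∑ c, p i j c * log (q i j c)`. -/
theorem adversarial_risk_sub_empirical_risk_bounded
    {K : Type*} [Fintype K] [Nonempty K]
    {n m : ℕ} (hn : 1 ≤ n) (hm : 1 ≤ m)
    (y : Fin m → K)
    (p q : Fin n → Fin m → K → ℝ)
    (hp0 : ∀ i j c, 0 ≤ p i j c) (hp1 : ∀ i j, ∑ c, p i j c = 1)
    (hq0 : ∀ i j c, 0 < q i j c) (hq1 : ∀ i j, ∑ c, q i j c = 1) :
    |(1 / ((n : ℝ) * (m : ℝ))) * ∑ i, ∑ j, q i j (y j) -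
        (1 / ((n : ℝ) * (m : ℝ))) * ∑ i, ∑ j, p i j (y j)| ≤
      1 - (1 / (m : ℝ)) * ∑ j, Real.exp
        ((1 / (n : ℝ)) * ∑ i, ∑ c, p i j c * Real.log (q i j c)) := by
  have hN : (0:ℝ) < n := by exact_mod_cast hn
  have hM : (0:ℝ) < m := by exact_mod_cast hm
  set r : Fin n → Fin m → ℝ := fun i j => ∑ c, p i j c * Real.log (q i j c) with hr
  -- Step 1: |LHS| ≤ (1/(nm)) ∑∑ (1 - exp (r i j))
  have step1 : |(1 / ((n : ℝ) * (m : ℝ))) * ∑ i, ∑ j, q i j (y j) -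
      (1 / ((n : ℝ) * (m : ℝ))) * ∑ i, ∑ j, p i j (y j)| ≤
      (1 / ((n : ℝ) * (m : ℝ))) * ∑ i, ∑ j, (1 - Real.exp (r i j)) := by
    have : (1 / ((n : ℝ) * (m : ℝ))) * ∑ i, ∑ j, q i j (y j) -
        (1 / ((n : ℝ) * (m : ℝ))) * ∑ i, ∑ j, p i j (y j) =
        (1 / ((n : ℝ) * (m : ℝ))) * ∑ i, ∑ j, (q i j (y j) - p i j (y j)) := by
      rw [← mul_sub]
      congr 1
      rw [← Finset.sum_sub_distrib]
      congr 1 with i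
      rw [← Finset.sum_sub_distrib]
    rw [this, abs_mul, abs_of_pos (by positivity)]
    apply mul_le_mul_of_nonneg_left _ (by positivity)
    calc |∑ i, ∑ j, (q i j (y j) - p i j (y j))|
        ≤ ∑ i, |∑ j, (q i j (y j) - p i j (y j))| := Finset.abs_sum_le_sum_abs _ _
      _ ≤ ∑ i, ∑ j, |q i j (y j) - p i j (y j)| :=
          Finset.sum_le_sum fun i _ => Finset.abs_sum_le_sum_abs _ _
      _ ≤ ∑ i, ∑ j, (1 - Real.exp (r i j)) := by
          apply Finset.sum_le_sum; intro i _
          apply Finset.sum_le_sum; intro j _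
          exact key_bound (y j) (p i j) (q i j) (hp0 i j) (hp1 i j) (hq0 i j) (hq1 i j)
  -- Step 2: rewrite RHS of step1
  have step2 : (1 / ((n : ℝ) * (m : ℝ))) * ∑ i, ∑ j, (1 - Real.exp (r i j)) =
      1 - (1 / ((n : ℝ) * (m : ℝ))) * ∑ i, ∑ j, Real.exp (r i j) := by
    simp only [Finset.sum_sub_distrib, Finset.sum_const, Finset.card_univ, Fintype.card_fin,
      nsmul_eq_mul, mul_one]
    rw [mul_sub]
    field_simp
  -- Step 3: Jensen
  have step3 : (1 / (m : ℝ)) * ∑ j, Real.exp ((1 / (n : ℝ)) * ∑ i, r i j) ≤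
      (1 / ((n : ℝ) * (m : ℝ))) * ∑ i, ∑ j, Real.exp (r i j) := by
    rw [Finset.sum_comm]
    have : (1 / ((n : ℝ) * (m : ℝ))) * ∑ j, ∑ i, Real.exp (r i j) =
        (1 / (m : ℝ)) * ∑ j, (1 / (n : ℝ)) * ∑ i, Real.exp (r i j) := by
      rw [Finset.mul_sum, Finset.mul_sum]
      congr 1 with j
      rw [← mul_assoc]
      congr 1
      field_simp
    rw [this]
    apply mul_le_mul_of_nonneg_left _ (by positivity)
    exact Finset.sum_le_sum fun j _ => exp_avg_le hn (fun i => r i j)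
  calc |(1 / ((n : ℝ) * (m : ℝ))) * ∑ i, ∑ j, q i j (y j) -
      (1 / ((n : ℝ) * (m : ℝ))) * ∑ i, ∑ j, p i j (y j)|
      ≤ (1 / ((n : ℝ) * (m : ℝ))) * ∑ i, ∑ j, (1 - Real.exp (r i j)) := step1
    _ = 1 - (1 / ((n : ℝ) * (m : ℝ))) * ∑ i, ∑ j, Real.exp (r i j) := step2
    _ ≤ 1 - (1 / (m : ℝ)) * ∑ j, Real.exp ((1 / (n : ℝ)) * ∑ i, r i j) := by linarith [step3]
end

section
/- The difference between the adversarial risk and the empirical risk is bounded by the average cross-entropy between the clean and adversarial predictive distributions: |R_adv − R| ≤ −(1/(n·m)) ∑_{i,j} r_{i,j}. (Paper's relaxation of the Proposition 1 bound obtained by dropping the exponential, using 1 − exp(−z) ≤ z.) -/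
lemma aux_abs_le_one_sub_dot {K : Type*} [Fintype K] [DecidableEq K] (y : K) (p q : K → ℝ)
    (hp0 : ∀ c, 0 ≤ p c) (hp1 : ∑ c, p c = 1)
    (hq0 : ∀ c, 0 ≤ q c) (hq1 : ∑ c, q c = 1) :
    |q y - p y| ≤ ∑ c, p c * (1 - q c) := by
  have hsplitp : ∑ c, p c = p y + ∑ c ∈ Finset.univ.erase y, p c :=
    (Finset.add_sum_erase _ p (Finset.mem_univ y)).symm
  have hsplitq : ∑ c, q c = q y + ∑ c ∈ Finset.univ.erase y, q c :=
    (Finset.add_sum_erase _ q (Finset.mem_univ y)).symm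
  have hsplitpq : ∑ c, p c * q c
      = p y * q y + ∑ c ∈ Finset.univ.erase y, p c * q c :=
    (Finset.add_sum_erase _ (fun c => p c * q c) (Finset.mem_univ y)).symm
  have hqbound : ∀ c ∈ Finset.univ.erase y, q c ≤ 1 - q y := by
    intro c hc
    have : q c ≤ ∑ c ∈ Finset.univ.erase y, q c :=
      Finset.single_le_sum (fun c _ => hq0 c) hc
    linarith [hsplitq, hq1]
  have hS : ∑ c ∈ Finset.univ.erase y, p c * q c ≤ (1 - p y) * (1 - q y) := by
    calc ∑ c ∈ Finset.univ.erase y, p c * q c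
        ≤ ∑ c ∈ Finset.univ.erase y, p c * (1 - q y) :=
          Finset.sum_le_sum (fun c hc =>
            mul_le_mul_of_nonneg_left (hqbound c hc) (hp0 c))
      _ = (∑ c ∈ Finset.univ.erase y, p c) * (1 - q y) := by
          rw [Finset.sum_mul]
      _ = (1 - p y) * (1 - q y) := by
          have : ∑ c ∈ Finset.univ.erase y, p c = 1 - p y := by
            linarith [hsplitp, hp1]
          rw [this]
  have hsum : ∑ c, p c * (1 - q c) = 1 - ∑ c, p c * q c := by
    simp [mul_sub, Finset.sum_sub_distrib, hp1]
  have hpy0 := hp0 y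
  have hqy0 := hq0 y
  have hpE0 : 0 ≤ ∑ c ∈ Finset.univ.erase y, p c :=
    Finset.sum_nonneg fun c _ => hp0 c
  have hqE0 : 0 ≤ ∑ c ∈ Finset.univ.erase y, q c :=
    Finset.sum_nonneg fun c _ => hq0 c
  have hpy1 : p y ≤ 1 := by linarith [hsplitp, hp1]
  have hqy1 : q y ≤ 1 := by linarith [hsplitq, hq1]
  rw [abs_le]
  constructor <;>
    nlinarith [hsplitpq, hp1, hq1, hS, hsum,
      mul_nonneg hpy0 (sub_nonneg.2 hqy1), mul_nonneg hqy0 (sub_nonneg.2 hpy1)]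

/-- Paper's relaxation of the Proposition 1 bound, obtained by dropping the
exponential (`1 − exp (−z) ≤ z`): the difference between the adversarial risk
and the empirical risk is bounded by the average cross-entropy between the
clean and adversarial predictive distributions,
`−(1/(n·m)) ∑_{i,j} r i j` with `r i j = ∑ c, p i j c * log (q i j c)`. -/
theorem adversarial_risk_sub_empirical_risk_le_avg_cross_entropy
    {K : Type*} [Fintype K] [Nonempty K]
    {n m : ℕ} (hn : 1 ≤ n) (hm : 1 ≤ m)
    (y : Fin m → K)
    (p q : Fin n → Fin m → K → ℝ)
    (hp0 : ∀ i j c, 0 ≤ p i j c) (hp1 : ∀ i j, ∑ c, p i j c = 1)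
    (hq0 : ∀ i j c, 0 < q i j c) (hq1 : ∀ i j, ∑ c, q i j c = 1) :
    |(1 / ((n : ℝ) * (m : ℝ))) * ∑ i, ∑ j, q i j (y j) -
        (1 / ((n : ℝ) * (m : ℝ))) * ∑ i, ∑ j, p i j (y j)| ≤
      -((1 / ((n : ℝ) * (m : ℝ))) *
          ∑ i, ∑ j, ∑ c, p i j c * Real.log (q i j c)) := by
  classical
  have hnm : (0:ℝ) < (n : ℝ) * (m : ℝ) := by
    have : (0:ℝ) < (n:ℝ) := by exact_mod_cast hn
    have : (0:ℝ) < (m:ℝ) := by exact_mod_cast hm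
    positivity
  have ha : (0:ℝ) ≤ 1 / ((n : ℝ) * (m : ℝ)) := by positivity
  rw [← mul_sub, ← mul_neg, abs_mul, abs_of_nonneg ha]
  apply mul_le_mul_of_nonneg_left _ ha
  rw [← Finset.sum_sub_distrib, ← Finset.sum_neg_distrib]
  refine (Finset.abs_sum_le_sum_abs _ _).trans (Finset.sum_le_sum ?_)
  intro i _
  rw [← Finset.sum_sub_distrib, ← Finset.sum_neg_distrib]
  refine (Finset.abs_sum_le_sum_abs _ _).trans (Finset.sum_le_sum ?_)
  intro j _
  have h1 : |q i j (y j) - p i j (y j)| ≤ ∑ c, p i j c * (1 - q i j c) :=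
    aux_abs_le_one_sub_dot (y j) (p i j) (q i j) (hp0 i j) (hp1 i j)
      (fun c => (hq0 i j c).le) (hq1 i j)
  refine h1.trans ?_
  rw [← Finset.sum_neg_distrib]
  refine Finset.sum_le_sum fun c _ => ?_
  rw [← mul_neg]
  apply mul_le_mul_of_nonneg_left _ (hp0 i j c)
  have := Real.log_le_sub_one_of_pos (hq0 i j c)
  linarith
end

section
/- For probability vectors p and q on a finite nonempty type K with q(c) > 0 for all c ∈ K, and any label y ∈ K: |p(y) − q(y)| ≤ 1 − exp( ∑_{c ∈ K} p(c) · log(q(c)) ), i.e., the per-sample difference between clean and adversarial prediction probabilities for the true label is bounded by one minus the exponentiated negative cross-entropy between p and q. (Per-sample, single-parameter form of the Proposition 1 bound.) -/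
/-- Per-sample, single-parameter form of the Proposition 1 bound: the
difference between clean and adversarial prediction probabilities for the true
label is bounded by one minus the exponentiated negative cross-entropy. -/
theorem abs_prob_diff_le_one_sub_exp_neg_cross_entropy
    {K : Type*} [Fintype K] [Nonempty K]
    (p q : K → ℝ)
    (hp0 : ∀ c, 0 ≤ p c) (hp1 : ∑ c, p c = 1)
    (hq0 : ∀ c, 0 < q c) (hq1 : ∑ c, q c = 1)
    (y : K) :
    |p y - q y| ≤ 1 - Real.exp (∑ c, p c * Real.log (q c)) := by
  classical
  have hple : ∀ c, p c ≤ 1 := by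
    intro c
    rw [← hp1]
    exact Finset.single_le_sum (fun i _ => hp0 i) (Finset.mem_univ c)
  have hqle : ∀ c, q c ≤ 1 := by
    intro c
    rw [← hq1]
    exact Finset.single_le_sum (fun i _ => (hq0 i).le) (Finset.mem_univ c)
  have hexp : Real.exp (∑ c, p c * Real.log (q c)) ≤ ∑ c, p c * q c := by
    have := Real.geom_mean_le_arith_mean_weighted Finset.univ p q
      (fun i _ => hp0 i) hp1 (fun i _ => (hq0 i).le)
    calc Real.exp (∑ c, p c * Real.log (q c))
        = ∏ c, q c ^ p c := by
          rw [Real.exp_sum]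
          exact Finset.prod_congr rfl fun c _ => by
            rw [Real.rpow_def_of_pos (hq0 c), mul_comm]
      _ ≤ ∑ c, p c * q c := this
  have hsplit : p y * q y + ∑ c ∈ Finset.univ.erase y, p c * q c = ∑ c, p c * q c :=
    Finset.add_sum_erase Finset.univ (fun c => p c * q c) (Finset.mem_univ y)
  have hpE : p y + ∑ c ∈ Finset.univ.erase y, p c = 1 := by
    rw [Finset.add_sum_erase Finset.univ p (Finset.mem_univ y)]; exact hp1
  have hqE : q y + ∑ c ∈ Finset.univ.erase y, q c = 1 := by
    rw [Finset.add_sum_erase Finset.univ q (Finset.mem_univ y)]; exact hq1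
  have hS1 : ∑ c ∈ Finset.univ.erase y, p c * q c ≤ ∑ c ∈ Finset.univ.erase y, p c :=
    Finset.sum_le_sum fun c _ => by nlinarith [hp0 c, (hq0 c).le, hqle c]
  have hS2 : ∑ c ∈ Finset.univ.erase y, p c * q c ≤ ∑ c ∈ Finset.univ.erase y, q c :=
    Finset.sum_le_sum fun c _ => by nlinarith [hp0 c, (hq0 c).le, hple c]
  have key : ∑ c, p c * q c ≤ 1 - |p y - q y| := by
    rcases abs_cases (p y - q y) with ⟨h, _⟩ | ⟨h, _⟩ <;> rw [h] <;>
      nlinarith [hp0 y, (hq0 y).le, hple y, hqle y]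
  linarith
end

section
/- Let p₁, …, p_n and q₁, …, q_n be probability vectors on a finite nonempty type K with q_i(c) > 0 for all i and all c ∈ K, and let y ∈ K. Then | (1/n) ∑_{i} p_i(y) − (1/n) ∑_{i} q_i(y) | ≤ 1 − exp( (1/n) ∑_{i} ∑_{c ∈ K} p_i(c) · log(q_i(c)) ), i.e., the difference between the ensemble-averaged clean and adversarial prediction probabilities for the true label is bounded by one minus the exponential of the average of the per-particle terms r_i = ∑_c p_i(c) log q_i(c). (Per-sample, particle-averaged step in the proof of Proposition 1, combining the overlap bound with Jensen's inequality for exp over the particle distribution.) -/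
open Finset

private lemma sum_mul_le_aux {K : Type*} [Fintype K] [DecidableEq K] (a b : K → ℝ)
    (ha0 : ∀ c, 0 ≤ a c) (ha1 : ∀ c, a c ≤ 1)
    (hb0 : ∀ c, 0 ≤ b c) (hb1 : ∀ c, b c ≤ 1)
    (hasum : ∑ c, a c = 1) (y : K) :
    ∑ c, a c * b c ≤ 1 - a y + b y := by
  have e1 : a y * b y + ∑ c ∈ univ.erase y, a c * b c = ∑ c, a c * b c :=
    Finset.add_sum_erase univ (fun c => a c * b c) (mem_univ y)
  have e2 : ∑ c ∈ univ.erase y, a c * b c ≤ ∑ c ∈ univ.erase y, a c :=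
    Finset.sum_le_sum fun c _ => mul_le_of_le_one_right (ha0 c) (hb1 c)
  have e3 : ∑ c ∈ univ.erase y, a c = (∑ c, a c) - a y :=
    Finset.sum_erase_eq_sub (mem_univ y)
  have e4 : a y * b y ≤ b y := mul_le_of_le_one_left (hb0 y) (ha1 y)
  rw [hasum] at e3
  linarith

private lemma per_particle {K : Type*} [Fintype K] (p q : K → ℝ)
    (hp0 : ∀ c, 0 ≤ p c) (hp1 : ∑ c, p c = 1)
    (hq0 : ∀ c, 0 < q c) (hq1 : ∑ c, q c = 1) (y : K) :
    |p y - q y| ≤ 1 - Real.exp (∑ c, p c * Real.log (q c)) := by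
  classical
  have hpq : ∀ c, p c ≤ 1 := fun c => hp1 ▸
    Finset.single_le_sum (fun c _ => hp0 c) (mem_univ c)
  have hq1' : ∀ c, q c ≤ 1 := fun c => hq1 ▸
    Finset.single_le_sum (fun c _ => (hq0 c).le) (mem_univ c)
  have jensen : Real.exp (∑ c, p c * Real.log (q c)) ≤ ∑ c, p c * q c := by
    have := convexOn_exp.map_sum_le (t := Finset.univ) (w := p)
      (p := fun c => Real.log (q c)) (fun c _ => hp0 c) hp1 (fun c _ => Set.mem_univ _)
    simpa [smul_eq_mul, Real.exp_log (hq0 _)] using this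
  have k1 : ∑ c, p c * q c ≤ 1 - p y + q y :=
    sum_mul_le_aux p q hp0 hpq (fun c => (hq0 c).le) hq1' hp1 y
  have k2 : ∑ c, p c * q c ≤ 1 - q y + p y := by
    have := sum_mul_le_aux q p (fun c => (hq0 c).le) hq1' hp0 hpq hq1 y
    simpa [mul_comm] using this
  rw [abs_sub_le_iff]
  constructor <;> linarith

/-- Per-sample, particle-averaged step in the proof of Proposition 1: the
difference between the ensemble-averaged clean and adversarial prediction
probabilities for the true label is bounded by one minus the exponential of
the average of the per-particle terms `r i = ∑ c, p i c * log (q i c)`. -/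
theorem abs_avg_prob_diff_le_one_sub_exp_avg_neg_cross_entropy
    {K : Type*} [Fintype K] [Nonempty K]
    {n : ℕ} (hn : 1 ≤ n)
    (p q : Fin n → K → ℝ)
    (hp0 : ∀ i c, 0 ≤ p i c) (hp1 : ∀ i, ∑ c, p i c = 1)
    (hq0 : ∀ i c, 0 < q i c) (hq1 : ∀ i, ∑ c, q i c = 1)
    (y : K) :
    |(1 / (n : ℝ)) * ∑ i, p i y - (1 / (n : ℝ)) * ∑ i, q i y| ≤
      1 - Real.exp ((1 / (n : ℝ)) * ∑ i, ∑ c, p i c * Real.log (q i c)) := by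
  have hn0 : (0:ℝ) < n := by exact_mod_cast hn
  set r : Fin n → ℝ := fun i => ∑ c, p i c * Real.log (q i c) with hr
  have hwsum : ∑ _i : Fin n, (1 / (n:ℝ)) = 1 := by
    simp [Finset.sum_const, Finset.card_univ]
    field_simp
  -- Jensen over particles
  have jensen : Real.exp ((1 / (n:ℝ)) * ∑ i, r i) ≤ (1 / (n:ℝ)) * ∑ i, Real.exp (r i) := by
    have := convexOn_exp.map_sum_le (t := Finset.univ) (w := fun _ : Fin n => 1 / (n:ℝ))
      (p := r) (fun i _ => by positivity) hwsum (fun i _ => Set.mem_univ _)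
    simpa [smul_eq_mul, Finset.mul_sum] using this
  have step1 : |(1 / (n : ℝ)) * ∑ i, p i y - (1 / (n : ℝ)) * ∑ i, q i y|
      ≤ (1 / (n:ℝ)) * ∑ i, |p i y - q i y| := by
    rw [← mul_sub, ← Finset.sum_sub_distrib, abs_mul,
      abs_of_nonneg (le_of_lt (by positivity : (0:ℝ) < 1 / n))]
    exact mul_le_mul_of_nonneg_left (Finset.abs_sum_le_sum_abs _ _) (by positivity)
  have step2 : ∑ i, |p i y - q i y| ≤ ∑ i, (1 - Real.exp (r i)) :=
    Finset.sum_le_sum fun i _ => per_particle (p i) (q i) (hp0 i) (hp1 i) (hq0 i) (hq1 i) y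
  have step3 : (1 / (n:ℝ)) * ∑ i, (1 - Real.exp (r i))
      = 1 - (1 / (n:ℝ)) * ∑ i, Real.exp (r i) := by
    rw [Finset.sum_sub_distrib, Finset.sum_const, Finset.card_univ, Fintype.card_fin]
    field_simp
    rw [nsmul_eq_mul, mul_one]
  have : (1 / (n:ℝ)) * ∑ i, |p i y - q i y| ≤ 1 - Real.exp ((1 / (n:ℝ)) * ∑ i, r i) := by
    calc (1 / (n:ℝ)) * ∑ i, |p i y - q i y|
        ≤ (1 / (n:ℝ)) * ∑ i, (1 - Real.exp (r i)) := mul_le_mul_of_nonneg_left step2 (by positivity)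
      _ = 1 - (1 / (n:ℝ)) * ∑ i, Real.exp (r i) := step3
      _ ≤ 1 - Real.exp ((1 / (n:ℝ)) * ∑ i, r i) := by linarith
  exact step1.trans this
end
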